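/- Let g ≥ 2, L ≥ 0, and α ∈ ℝ with σ := min_{0≤i≤L} ‖g^i (g²−1) α‖ > 0. Define the seed α_L by α_{L,i}(n) := α·n·g^{L−i−1}. Then for every λ with 0 ≤ λ ≤ L, the quantity σ_λ(α_L) := Σ_{0≤i<λ} γ_i(α_L) satisfies σ_λ(α_L) ≥ c_g·λ/log(1/σ) − C_g for constants c_g, C_g > 0 depending only on g. -/

import Mathlib

/-- Distance from `x` to the nearest integer. -/
noncomputable def nint (x : ℝ) : ℝ := |x - round x|

/-- The quantity `γ_i(β)` for a seed `β` of maps `{0,…,g−1} → ℝ`. -/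
noncomputable def gam (g : ℕ) (β : ℕ → ℕ → ℝ) (i : ℕ) : ℝ :=
  (2 * Real.log 2) / (((g : ℝ) - 1) * (g : ℝ) ^ 4 * (Real.log g) ^ 2) *
    ∑ n ∈ Finset.range g, ∑ m ∈ Finset.range n,
      nint (((g : ℝ) * β i m - β (i + 1) m) - ((g : ℝ) * β i n - β (i + 1) n)) ^ 2

/-- The quantity `σ_λ(β)`. -/
noncomputable def sig (g : ℕ) (β : ℕ → ℕ → ℝ) (lam : ℕ) : ℝ :=
  ∑ i ∈ Finset.range lam, gam g β i

/-- The seed `α_L` attached to the digital reverse: `α_{L,i}(n) = α n g^{L−i−1}`. -/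
noncomputable def seedL (g L : ℕ) (α : ℝ) : ℕ → ℕ → ℝ :=
  fun i n => α * n * (g : ℝ) ^ ((L : ℤ) - i - 1)

/-!
The `(m, n) = (0, 1)` term of `γ_i(α_L)` is `‖g^(L-i-2) (g²-1) α‖²`, so `γ_i(α_L)` is bounded
below by a constant times that square. While `g ‖x‖ ≤ 1/2`, multiplication by `g` scales `‖x‖`
by exactly `g`; starting from `‖g^j (g²-1) α‖ ≥ σ`, within `K = ⌈log(1/σ) / log g⌉` further
multiplications some `‖g^j (g²-1) α‖` reaches `1/(2g)`. Hence every window of `K + 1`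
consecutive indices `i < λ - 1` contains some `γ_i(α_L) ≥ c_g`, and `σ_λ(α_L)` is at least
`c_g` times the number `≈ λ / (K + 1)` of disjoint windows.
-/

open Finset

lemma nint_eq_norm (x : ℝ) : nint x = ‖(x : UnitAddCircle)‖ := UnitAddCircle.norm_eq.symm

lemma nint_le_half (x : ℝ) : nint x ≤ 1 / 2 := abs_sub_round x

lemma nint_neg (x : ℝ) : nint (-x) = nint x := by
  rw [nint_eq_norm, nint_eq_norm, AddCircle.coe_neg, norm_neg]

lemma nint_eq_abs_of_abs_le_half {x : ℝ} (h : |x| ≤ 1 / 2) : nint x = |x| := by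
  rw [nint_eq_norm, AddCircle.norm_coe_eq_abs_iff 1 one_ne_zero]
  simpa using h

lemma nint_intCast_add (m : ℤ) (x : ℝ) : nint (m + x) = nint x := by
  simp only [nint, round_intCast_add, Int.cast_add, add_sub_add_left_eq_sub]

lemma nint_natCast_mul_of_mul_le_half (g : ℕ) {x : ℝ} (h : g * nint x ≤ 1 / 2) :
    nint (g * x) = g * nint x := by
  have hsplit : (g : ℝ) * x = (g * round x : ℤ) + g * (x - round x) := by push_cast; ring
  have habs : |(g : ℝ) * (x - round x)| = g * nint x := by
    rw [abs_mul, Nat.abs_cast]; rfl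
  rw [hsplit, nint_intCast_add, nint_eq_abs_of_abs_le_half (habs ▸ h), habs]

section Expansion

variable {g : ℕ} (hg : 0 < g) {x : ℝ}
include hg

lemma nint_pow_mul_of_forall_lt {K : ℕ} (hsmall : ∀ k < K, nint (g ^ k * x) < 1 / (2 * g)) :
    nint (g ^ K * x) = g ^ K * nint x := by
  induction K with
  | zero => simp
  | succ K ih =>
    have hK := hsmall K K.lt_succ_self
    have hmul : (g : ℝ) * nint (g ^ K * x) ≤ 1 / 2 := by
      have hgR : (0 : ℝ) < g := Nat.cast_pos.mpr hg
      calc (g : ℝ) * nint (g ^ K * x) ≤ g * (1 / (2 * g)) := by gcongr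
        _ = 1 / 2 := by field_simp
    rw [pow_succ', mul_assoc, nint_natCast_mul_of_mul_le_half g hmul,
      ih fun k hk => hsmall k (hk.trans K.lt_succ_self)]
    ring

lemma exists_le_nint_pow_mul {K : ℕ} (hK : 1 / (2 * g) ≤ g ^ K * nint x) :
    ∃ k ≤ K, 1 / (2 * g) ≤ nint (g ^ k * x) := by
  by_contra! hsmall
  have := nint_pow_mul_of_forall_lt hg fun k hk => hsmall k hk.le
  linarith [hsmall K le_rfl]

end Expansion

lemma nsmul_le_sum_range_of_windows {M : Type*} [AddCommMonoid M] [PartialOrder M]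
    [IsOrderedAddMonoid M] {f : ℕ → M} {c : M} {K N : ℕ} (hf : ∀ i < N, 0 ≤ f i)
    (hwin : ∀ m, m + K < N → ∃ i ∈ Icc m (m + K), c ≤ f i) :
    (N / (K + 1)) • c ≤ ∑ i ∈ range N, f i := by
  have hW : N / (K + 1) * (K + 1) ≤ N := Nat.div_mul_le_self N (K + 1)
  have key : ∀ w ≤ N / (K + 1), w • c ≤ ∑ i ∈ range (w * (K + 1)), f i := by
    intro w
    induction w with
    | zero => simp
    | succ w ih =>
      intro hw
      have hlt : w * (K + 1) + K < N := by nlinarith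
      obtain ⟨i, hi, hci⟩ := hwin (w * (K + 1)) hlt
      rw [mem_Icc] at hi
      have hwindow : c ≤ ∑ j ∈ range (K + 1), f (w * (K + 1) + j) := by
        refine hci.trans (le_of_eq_of_le ?_ (single_le_sum (a := i - w * (K + 1))
          (fun j hj => hf _ ?_) (mem_range.mpr (by omega))))
        · congr 1; omega
        · rw [mem_range] at hj; omega
      rw [succ_nsmul, add_mul, one_mul, sum_range_add]
      exact add_le_add (ih (by omega)) hwindow
  exact (key _ le_rfl).trans
    (sum_le_sum_of_subset_of_nonneg (range_subset_range.mpr hW) fun i hi _ => hf i (mem_range.mp hi))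

lemma natCast_mul_seedL_sub_seedL_succ {g L i : ℕ} (hg : g ≠ 0) (hi : i + 2 ≤ L) (α : ℝ) (n : ℕ) :
    g * seedL g L α i n - seedL g L α (i + 1) n = n * (g ^ (L - i - 2) * ((g : ℝ) ^ 2 - 1) * α) := by
  have hexp₁ : (L : ℤ) - i - 1 = ((L - i - 2 : ℕ) : ℤ) + 1 := by omega
  have hexp₂ : (L : ℤ) - (i + 1 : ℕ) - 1 = ((L - i - 2 : ℕ) : ℤ) := by push_cast; omega
  simp only [seedL]
  rw [hexp₁, hexp₂, zpow_add₀ (Nat.cast_ne_zero.mpr hg), zpow_one, zpow_natCast]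
  ring

-- The prefactor of `gam`: `gam g β i = gamCoeff g * ∑ …` holds by `rfl`.
noncomputable def gamCoeff (g : ℕ) : ℝ :=
  2 * Real.log 2 / (((g : ℝ) - 1) * (g : ℝ) ^ 4 * (Real.log g) ^ 2)

section Reverse

variable {g : ℕ} (hg : 2 ≤ g)
include hg

lemma gamCoeff_pos : 0 < gamCoeff g := by
  have hgR : (2 : ℝ) ≤ g := by exact_mod_cast hg
  have : 0 < Real.log g := Real.log_pos (by linarith)
  have : 0 < Real.log 2 := Real.log_pos one_lt_two
  exact div_pos (by positivity) (mul_pos (mul_pos (by linarith) (by positivity)) (by positivity))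

lemma gam_nonneg (β : ℕ → ℕ → ℝ) (i : ℕ) : 0 ≤ gam g β i :=
  mul_nonneg (gamCoeff_pos hg).le <| sum_nonneg fun _ _ => sum_nonneg fun _ _ => sq_nonneg _

lemma gam_seedL_ge {L i : ℕ} (hi : i + 2 ≤ L) (α : ℝ) :
    gamCoeff g * nint (g ^ (L - i - 2) * ((g : ℝ) ^ 2 - 1) * α) ^ 2 ≤ gam g (seedL g L α) i := by
  refine mul_le_mul_of_nonneg_left ?_ (gamCoeff_pos hg).le
  have hterm : nint (g ^ (L - i - 2) * ((g : ℝ) ^ 2 - 1) * α) ^ 2 = ∑ m ∈ range 1,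
      nint ((g * seedL g L α i m - seedL g L α (i + 1) m)
        - (g * seedL g L α i 1 - seedL g L α (i + 1) 1)) ^ 2 := by
    simp [natCast_mul_seedL_sub_seedL_succ (by omega : g ≠ 0) hi, ← nint_neg (_ * α)]
  rw [hterm]
  exact single_le_sum (f := fun n => ∑ m ∈ range n, nint ((g * seedL g L α i m
      - seedL g L α (i + 1) m) - (g * seedL g L α i n - seedL g L α (i + 1) n)) ^ 2)
    (fun _ _ => sum_nonneg fun _ _ => sq_nonneg _) (mem_range.mpr (by omega))

lemma exists_large_gam_seedL_mem_Icc {L K m : ℕ} {α σ : ℝ}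
    (hσ : ∀ j ≤ L, σ ≤ nint (g ^ j * ((g : ℝ) ^ 2 - 1) * α)) (hK : 1 ≤ g ^ K * σ)
    (hm : m + K + 2 ≤ L) :
    ∃ i ∈ Icc m (m + K), gamCoeff g * (1 / (2 * g)) ^ 2 ≤ gam g (seedL g L α) i := by
  have hgR : (2 : ℝ) ≤ g := by exact_mod_cast hg
  set j₀ := L - 2 - (m + K)
  have hstart : 1 / (2 * g) ≤ g ^ K * nint (g ^ j₀ * ((g : ℝ) ^ 2 - 1) * α) := by
    calc 1 / (2 * (g : ℝ)) ≤ 1 := by rw [div_le_one (by positivity)]; linarith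
      _ ≤ g ^ K * σ := hK
      _ ≤ _ := by gcongr; exact hσ j₀ (by omega)
  obtain ⟨k, hk, hlarge⟩ := exists_le_nint_pow_mul (by omega) hstart
  refine ⟨m + K - k, mem_Icc.mpr ⟨by omega, by omega⟩, ?_⟩
  have hexp : L - (m + K - k) - 2 = k + j₀ := by omega
  refine le_trans ?_ (gam_seedL_ge hg (by omega) α)
  have hpow : (g : ℝ) ^ (k + j₀) * ((g : ℝ) ^ 2 - 1) * α
      = g ^ k * (g ^ j₀ * ((g : ℝ) ^ 2 - 1) * α) := by ring
  rw [hexp, hpow]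
  gcongr
  exact (gamCoeff_pos hg).le

lemma natCast_div_mul_le_sig_seedL {L K lam : ℕ} {α σ : ℝ}
    (hσ : ∀ j ≤ L, σ ≤ nint (g ^ j * ((g : ℝ) ^ 2 - 1) * α)) (hK : 1 ≤ g ^ K * σ)
    (hlam : lam ≤ L) :
    ((lam - 1) / (K + 1) : ℕ) * (gamCoeff g * (1 / (2 * g)) ^ 2) ≤ sig g (seedL g L α) lam := by
  rw [← nsmul_eq_mul]
  calc _ ≤ ∑ i ∈ range (lam - 1), gam g (seedL g L α) i :=
        nsmul_le_sum_range_of_windows (fun i _ => gam_nonneg hg _ i) fun m hm =>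
          exists_large_gam_seedL_mem_Icc hg hσ hK (by omega)
    _ ≤ sig g (seedL g L α) lam :=
        sum_le_sum_of_subset_of_nonneg (range_subset_range.mpr (Nat.sub_le lam 1))
          fun i _ _ => gam_nonneg hg _ i

end Reverse

lemma one_le_pow_natCeil_log_div_log_mul {b σ : ℝ} (hb : 1 < b) (hσ : 0 < σ) :
    1 ≤ b ^ ⌈Real.log (1 / σ) / Real.log b⌉₊ * σ := by
  have hlog : Real.log (1 / σ) ≤ Real.log (b ^ ⌈Real.log (1 / σ) / Real.log b⌉₊) := by
    rw [Real.log_pow]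
    exact (div_le_iff₀ (Real.log_pos hb)).mp (Nat.le_ceil _)
  rw [← div_le_iff₀ hσ]
  exact (Real.log_le_log_iff (by positivity) (by positivity)).mp hlog

lemma natCeil_div_log_add_one_le {b ℓ : ℝ} (hb : 1 < b) (hℓ : Real.log 2 ≤ ℓ) :
    (⌈ℓ / Real.log b⌉₊ : ℝ) + 1 ≤ (1 / Real.log b + 2 / Real.log 2) * ℓ := by
  have hlogb := Real.log_pos hb
  have hlog2 := Real.log_pos one_lt_two
  have hceil := Nat.ceil_lt_add_one (div_nonneg (hlog2.le.trans hℓ) hlogb.le)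
  have htwo : 2 ≤ 2 * ℓ / Real.log 2 := by rw [le_div_iff₀ hlog2]; linarith
  have hsplit : (1 / Real.log b + 2 / Real.log 2) * ℓ = ℓ / Real.log b + 2 * ℓ / Real.log 2 := by
    ring
  linarith

lemma mul_div_sub_le_of_le_mul_add_one {c a ℓ x k w : ℝ} (hc : 0 ≤ c) (ha : 0 < a) (hℓ : 0 < ℓ)
    (hw : 0 ≤ w) (hx : x ≤ k * (w + 1)) (hk : k ≤ a * ℓ) : c / a * x / ℓ - c ≤ w * c := by
  have hxw : x / (a * ℓ) ≤ w + 1 := by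
    rw [div_le_iff₀ (by positivity)]
    nlinarith
  calc c / a * x / ℓ - c = c * (x / (a * ℓ)) - c := by field_simp
    _ ≤ c * (w + 1) - c := by gcongr
    _ = w * c := by ring

theorem reverse_sigma_lower (g : ℕ) (hg : 2 ≤ g) :
    ∃ c C : ℝ, 0 < c ∧ 0 < C ∧ ∀ (L : ℕ) (α : ℝ),
      0 < (Finset.range (L + 1)).inf'
          (Finset.nonempty_range_iff.mpr (Nat.succ_ne_zero L))
          (fun i => nint ((g : ℝ) ^ i * ((g : ℝ) ^ 2 - 1) * α)) →
      ∀ lam : ℕ, lam ≤ L →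
        c * lam / Real.log (1 / ((Finset.range (L + 1)).inf'
            (Finset.nonempty_range_iff.mpr (Nat.succ_ne_zero L))
            (fun i => nint ((g : ℝ) ^ i * ((g : ℝ) ^ 2 - 1) * α)))) - C ≤
          sig g (seedL g L α) lam := by
  have hgR : (1 : ℝ) < g := by exact_mod_cast hg
  set c₁ := gamCoeff g * (1 / (2 * g)) ^ 2
  have hc₁ : 0 < c₁ := mul_pos (gamCoeff_pos hg) (by positivity)
  have ha : 0 < 1 / Real.log g + 2 / Real.log 2 := by have := Real.log_pos hgR; positivity
  refine ⟨c₁ / (1 / Real.log g + 2 / Real.log 2), c₁, div_pos hc₁ ha, hc₁,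
    fun L α hσ lam hlam => ?_⟩
  set σ := (range (L + 1)).inf' _ fun i => nint ((g : ℝ) ^ i * ((g : ℝ) ^ 2 - 1) * α)
  have hσj : ∀ j ≤ L, σ ≤ nint ((g : ℝ) ^ j * ((g : ℝ) ^ 2 - 1) * α) :=
    fun j hj => inf'_le _ (mem_range.mpr (Nat.lt_succ_of_le hj))
  have hℓ : Real.log 2 ≤ Real.log (1 / σ) := by
    refine Real.log_le_log two_pos ((le_div_iff₀ hσ).mpr ?_)
    linarith [hσj 0 L.zero_le, nint_le_half ((g : ℝ) ^ 0 * ((g : ℝ) ^ 2 - 1) * α)]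
  set K := ⌈Real.log (1 / σ) / Real.log g⌉₊
  set W := (lam - 1) / (K + 1)
  have hlamW : (lam : ℝ) ≤ (K + 1) * (W + 1) := by
    have : lam - 1 < (K + 1) * (W + 1) := Nat.lt_mul_div_succ _ K.succ_pos
    exact_mod_cast (show lam ≤ (K + 1) * (W + 1) by omega)
  exact (mul_div_sub_le_of_le_mul_add_one hc₁.le ha ((Real.log_pos one_lt_two).trans_le hℓ)
    W.cast_nonneg hlamW (natCeil_div_log_add_one_le hgR hℓ)).trans
    (natCast_div_mul_le_sig_seedL hg hσj (one_le_pow_natCeil_log_div_log_mul hgR hσ) hlam)
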